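/- Let M be an infinite Hermitian positive definite matrix, z₀ ∈ ℂ, and let (φ_n)_{n≥0} be the orthonormal polynomials of M: φ_n(z) = Σ_{k=0}^n v_n(k) z^k where each v_n is supported on {0,…,n}, v_n(n) is real and positive, and B_M(v_n, v_m) = 1 if n = m and 0 otherwise. Then: if Σ_{n=0}^∞ |φ_n(z₀)|² < ∞ then γ_{z₀}(M) = 1 / Σ_{n=0}^∞ |φ_n(z₀)|², and if Σ_{n=0}^∞ |φ_n(z₀)|² = ∞ then γ_{z₀}(M) = 0. In particular γ_{z₀}(M) > 0 if and only if Σ_{n=0}^∞ |φ_n(z₀)|² < ∞. -/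

import Mathlib

open Finset

/-- The sesquilinear form associated with an infinite matrix `M`:
`B_M(v,w) = Σ_{i,j} v_i · M(i,j) · conj(w_j)` for finitely supported `v, w`. -/
noncomputable def BM (M : ℕ → ℕ → ℂ) (v w : ℕ →₀ ℂ) : ℂ :=
  ∑ i ∈ v.support, ∑ j ∈ w.support, v i * M i j * (starRingEnd ℂ) (w j)

/-- The quadratic form `Q_M(v) = B_M(v,v)` (its real part; for Hermitian `M` it is real). -/
noncomputable def QM (M : ℕ → ℕ → ℂ) (v : ℕ →₀ ℂ) : ℝ :=
  (BM M v v).re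

/-- `M` is an (infinite) Hermitian matrix. -/
def IsHermitianMatrix (M : ℕ → ℕ → ℂ) : Prop :=
  ∀ i j, M j i = (starRingEnd ℂ) (M i j)

/-- `M` is positive definite: `Q_M(v) > 0` for every nonzero finitely supported `v`. -/
def IsPosDef (M : ℕ → ℕ → ℂ) : Prop :=
  ∀ v : ℕ →₀ ℂ, v ≠ 0 → 0 < QM M v

/-- `γ_{z₀}(M) = inf { Q_M(v) : v finitely supported, Σ_k v_k z₀^k = 1 }`. -/
noncomputable def gammaZ (M : ℕ → ℕ → ℂ) (z₀ : ℂ) : ℝ :=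
  sInf {x | ∃ v : ℕ →₀ ℂ, (∑ k ∈ v.support, v k * z₀ ^ k) = 1 ∧ QM M v = x}

open Filter Topology

/-!
Write `φ_n = evalAt z₀ (v n)` and `K_N = Σ_{n ≤ N} |φ_n|²`. As `v n` is supported on `{0, …, n}`
with nonzero `n`-th entry, the `v n` form a basis of the finitely supported sequences, so every
competitor is `u = Σ c_n v_n`, with `Q_M(u) = Σ |c_n|²` by orthonormality and `1 = Σ c_n φ_n`.
Cauchy–Schwarz then gives `Q_M(u) ≥ 1 / K_N` for `N` large, and the truncated reproducing kernel
`c_n = conj φ_n / K_N` attains `1 / K_N`. Hence `γ_{z₀}(M)` is the limit of the decreasing sequence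
`1 / K_N`, that is `1 / Σ |φ_n|²`, read as `0` when the series diverges.
-/

section SesquilinearForm

variable (M : ℕ → ℕ → ℂ)

lemma BM_eq_sum (v w : ℕ →₀ ℂ) :
    BM M v w = v.sum fun i a => w.sum fun j b => a * M i j * (starRingEnd ℂ) b := rfl

lemma BM_add_left (v v' w : ℕ →₀ ℂ) : BM M (v + v') w = BM M v w + BM M v' w := by
  simp only [BM_eq_sum]
  exact Finsupp.sum_add_index' (by simp) fun i a b => by simp [add_mul, Finsupp.sum_add]

lemma BM_smul_left (c : ℂ) (v w : ℕ →₀ ℂ) : BM M (c • v) w = c * BM M v w := by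
  simp only [BM_eq_sum]
  rw [Finsupp.sum_smul_index (by simp)]
  simp [Finsupp.mul_sum, mul_assoc]

lemma BM_add_right (v w w' : ℕ →₀ ℂ) : BM M v (w + w') = BM M v w + BM M v w' := by
  simp only [BM_eq_sum, ← Finsupp.sum_add]
  refine Finsupp.sum_congr fun i _ => ?_
  exact Finsupp.sum_add_index' (by simp) fun j a b => by simp [mul_add]

lemma BM_smul_right (c : ℂ) (v w : ℕ →₀ ℂ) :
    BM M v (c • w) = starRingEnd ℂ c * BM M v w := by
  simp only [BM_eq_sum, Finsupp.mul_sum]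
  refine Finsupp.sum_congr fun i _ => ?_
  rw [Finsupp.sum_smul_index (by simp)]
  exact Finsupp.sum_congr fun j _ => by simp only [map_mul]; ring

noncomputable def sesqBM : (ℕ →₀ ℂ) →ₗ[ℂ] (ℕ →₀ ℂ) →ₗ⋆[ℂ] ℂ :=
  LinearMap.mk₂'ₛₗ _ _ (BM M) (BM_add_left M) (BM_smul_left M) (BM_add_right M)
    (BM_smul_right M)

lemma sesqBM_apply (v w : ℕ →₀ ℂ) : sesqBM M v w = BM M v w := rfl

end SesquilinearForm

section Triangular

open Polynomial

variable {K : Type*} [Field K] (v : ℕ → ℕ →₀ K)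

noncomputable def triangularSequence (hsupp : ∀ n, (v n).support ⊆ Iic n)
    (hdiag : ∀ n, v n n ≠ 0) : Polynomial.Sequence K where
  elems' n := (basisMonomials K).repr.symm (v n)
  degree_eq' n := by
    refine degree_eq_of_le_of_coeff_ne_zero ((degree_le_iff_coeff_zero _ _).mpr fun k hk => ?_)
      (hdiag n)
    exact Finsupp.notMem_support_iff.mp fun hk' =>
      (mem_Iic.mp (hsupp n hk')).not_gt (by exact_mod_cast hk)

noncomputable def basisOfTriangular (hsupp : ∀ n, (v n).support ⊆ Iic n)
    (hdiag : ∀ n, v n n ≠ 0) : Module.Basis ℕ K (ℕ →₀ K) :=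
  ((triangularSequence v hsupp hdiag).basis fun n =>
    isUnit_iff_ne_zero.mpr (leadingCoeff_ne_zero.mpr (Sequence.ne_zero _ n))).map
    (basisMonomials K).repr

@[simp]
lemma coe_basisOfTriangular (hsupp : ∀ n, (v n).support ⊆ Iic n)
    (hdiag : ∀ n, v n n ≠ 0) : ⇑(basisOfTriangular v hsupp hdiag) = v := by
  funext n
  simp only [basisOfTriangular, Module.Basis.map_apply, Sequence.basis_eq_self]
  exact LinearEquiv.apply_symm_apply _ _

lemma exists_eq_sum_smul_of_triangular (hsupp : ∀ n, (v n).support ⊆ Iic n)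
    (hdiag : ∀ n, v n n ≠ 0) (u : ℕ →₀ K) :
    ∃ (s : Finset ℕ) (c : ℕ → K), u = ∑ n ∈ s, c n • v n := by
  let b := basisOfTriangular v hsupp hdiag
  refine ⟨(b.repr u).support, b.repr u, ?_⟩
  conv_lhs => rw [← b.linearCombination_repr u]
  simp [Finsupp.linearCombination_apply, Finsupp.sum, b]

end Triangular

noncomputable def evalAt (z : ℂ) : (ℕ →₀ ℂ) →ₗ[ℂ] ℂ := Finsupp.linearCombination ℂ (z ^ ·)

lemma evalAt_apply (z : ℂ) (u : ℕ →₀ ℂ) : evalAt z u = ∑ k ∈ u.support, u k * z ^ k := by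
  simp [evalAt, Finsupp.linearCombination_apply, Finsupp.sum]

lemma QM_sum_smul_of_orthonormal {M : ℕ → ℕ → ℂ} {v : ℕ → ℕ →₀ ℂ}
    (horth : ∀ n m, BM M (v n) (v m) = if n = m then 1 else 0) (s : Finset ℕ) (c : ℕ → ℂ) :
    QM M (∑ n ∈ s, c n • v n) = ∑ n ∈ s, ‖c n‖ ^ 2 := by
  have h : BM M (∑ n ∈ s, c n • v n) (∑ n ∈ s, c n • v n) =
      ∑ n ∈ s, ((‖c n‖ ^ 2 : ℝ) : ℂ) := by
    rw [← sesqBM_apply]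
    simp only [map_sum, map_smul, map_smulₛₗ, LinearMap.sum_apply,
      LinearMap.smul_apply, sesqBM_apply, horth, smul_eq_mul, mul_ite, mul_one, mul_zero]
    refine sum_congr rfl fun n hn => ?_
    rw [sum_ite_eq', if_pos hn, Complex.conj_mul', Complex.ofReal_pow]
  rw [QM, h, ← Complex.ofReal_sum, Complex.ofReal_re]

lemma one_le_sum_sq_norm_mul_sum_sq_norm {ι 𝕜 : Type*} [NormedField 𝕜] {s : Finset ι}
    {c φ : ι → 𝕜} (h : ∑ n ∈ s, c n * φ n = 1) :
    1 ≤ (∑ n ∈ s, ‖c n‖ ^ 2) * ∑ n ∈ s, ‖φ n‖ ^ 2 := by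
  calc (1 : ℝ) = ‖∑ n ∈ s, c n * φ n‖ ^ 2 := by rw [h, norm_one, one_pow]
    _ ≤ (∑ n ∈ s, ‖c n‖ * ‖φ n‖) ^ 2 := by
        gcongr
        exact (norm_sum_le _ _).trans_eq (by simp only [norm_mul])
    _ ≤ _ := sum_mul_sq_le_sq_mul_sq s _ _

lemma exists_evalAt_eq_one_QM_eq_inv {M : ℕ → ℕ → ℂ} {v : ℕ → ℕ →₀ ℂ}
    (horth : ∀ n m, BM M (v n) (v m) = if n = m then 1 else 0) (z : ℂ) {s : Finset ℕ}
    (hs : 0 < ∑ n ∈ s, ‖evalAt z (v n)‖ ^ 2) :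
    ∃ u, evalAt z u = 1 ∧ QM M u = (∑ n ∈ s, ‖evalAt z (v n)‖ ^ 2)⁻¹ := by
  set T := ∑ n ∈ s, ‖evalAt z (v n)‖ ^ 2
  refine ⟨∑ n ∈ s, (starRingEnd ℂ (evalAt z (v n)) / T) • v n, ?_, ?_⟩
  · have hT : (T : ℂ) = ∑ n ∈ s, starRingEnd ℂ (evalAt z (v n)) * evalAt z (v n) := by
      push_cast [T]
      exact sum_congr rfl fun n _ => (Complex.conj_mul' _).symm
    simp only [map_sum, map_smul, smul_eq_mul, div_mul_eq_mul_div, ← sum_div, ← hT]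
    exact div_self (by exact_mod_cast hs.ne')
  · rw [QM_sum_smul_of_orthonormal horth]
    simp only [norm_div, Complex.norm_conj, Complex.norm_real, Real.norm_of_nonneg hs.le, div_pow,
      ← sum_div]
    rw [sq T, ← div_div, div_self hs.ne', one_div]

lemma isGLB_of_antitone_of_tendsto {α β : Type*} [TopologicalSpace α] [Preorder α]
    [OrderClosedTopology α] [Preorder β] [IsDirectedOrder β] [Nonempty β]
    {A : Set α} {u : β → α} {a : α} (hu : Antitone u) (ha : Tendsto u atTop (𝓝 a))
    (hmem : ∀ N, u N ∈ A) (hle : ∀ x ∈ A, ∃ N, u N ≤ x) : IsGLB A a := by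
  have h := isGLB_of_tendsto_atTop hu ha
  refine ⟨fun x hx => ?_, fun b hb => h.2 ?_⟩
  · obtain ⟨N, hN⟩ := hle x hx
    exact (h.1 ⟨N, rfl⟩).trans hN
  · rintro _ ⟨N, rfl⟩
    exact hb (hmem N)

lemma tendsto_inv_sum_range_succ {f : ℕ → ℝ} (hf : ∀ n, 0 ≤ f n) (h0 : 0 < f 0) :
    Tendsto (fun N => (∑ n ∈ range (N + 1), f n)⁻¹) atTop (𝓝 (∑' n, f n)⁻¹) := by
  by_cases hs : Summable f
  · exact ((hs.hasSum.tendsto_sum_nat.comp (tendsto_add_atTop_nat 1)).inv₀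
      (hs.tsum_pos hf 0 h0).ne')
  · rw [tsum_eq_zero_of_not_summable hs, inv_zero]
    exact (((not_summable_iff_tendsto_nat_atTop_of_nonneg hf).mp hs).comp
      (tendsto_add_atTop_nat 1)).inv_tendsto_atTop

lemma antitone_inv_sum_range_succ {f : ℕ → ℝ} (hf : ∀ n, 0 ≤ f n) (h0 : 0 < f 0) :
    Antitone fun N => (∑ n ∈ range (N + 1), f n)⁻¹ := fun _ _ h =>
  inv_anti₀ (sum_pos' (fun n _ => hf n) ⟨0, by simp, h0⟩)
    (sum_le_sum_of_subset_of_nonneg (range_subset_range.mpr (by omega)) fun n _ _ => hf n)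

lemma exists_inv_sum_range_le_QM {M : ℕ → ℕ → ℂ} {v : ℕ → ℕ →₀ ℂ}
    (horth : ∀ n m, BM M (v n) (v m) = if n = m then 1 else 0)
    (hsupp : ∀ n, (v n).support ⊆ Iic n) (hdiag : ∀ n, v n n ≠ 0) {z : ℂ} {u : ℕ →₀ ℂ}
    (hu : evalAt z u = 1) :
    ∃ N, (∑ n ∈ range (N + 1), ‖evalAt z (v n)‖ ^ 2)⁻¹ ≤ QM M u := by
  obtain ⟨s, c, rfl⟩ := exists_eq_sum_smul_of_triangular v hsupp hdiag u
  have hCS := one_le_sum_sq_norm_mul_sum_sq_norm (s := s) (c := c)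
    (φ := fun n => evalAt z (v n)) (by simpa using hu)
  rw [← QM_sum_smul_of_orthonormal horth] at hCS
  have hQ : 0 ≤ QM M (∑ n ∈ s, c n • v n) := by
    rw [QM_sum_smul_of_orthonormal horth]
    positivity
  have hsub : s ⊆ range (s.sup id + 1) := fun n hn =>
    mem_range_succ_iff.mpr (le_sup (f := id) hn)
  have hle := sum_le_sum_of_subset_of_nonneg hsub fun n _ _ => sq_nonneg ‖evalAt z (v n)‖
  have hCSN := hCS.trans (mul_le_mul_of_nonneg_left hle hQ)
  exact ⟨s.sup id,
    (inv_le_iff_one_le_mul₀ (pos_of_mul_pos_right (one_pos.trans_le hCSN) hQ)).mpr hCSN⟩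

lemma gammaZ_eq_sInf_evalAt (M : ℕ → ℕ → ℂ) (z : ℂ) :
    gammaZ M z = sInf {x | ∃ u, evalAt z u = 1 ∧ QM M u = x} := by
  simp only [gammaZ, evalAt_apply]

theorem gammaZ_eq_inv_kernel_general (M : ℕ → ℕ → ℂ) (z₀ : ℂ)
    (v : ℕ → (ℕ →₀ ℂ))
    (hsupp : ∀ n, (v n).support ⊆ Finset.Iic n)
    (hlead : ∀ n, ((v n) n).im = 0 ∧ 0 < ((v n) n).re)
    (horth : ∀ n m, BM M (v n) (v m) = if n = m then 1 else 0)
    (φz : ℕ → ℂ) (hφz : ∀ n, φz n = ∑ k ∈ (v n).support, (v n) k * z₀ ^ k) :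
    ((Summable (fun n => ‖φz n‖ ^ 2) →
        gammaZ M z₀ = 1 / ∑' n, ‖φz n‖ ^ 2) ∧
      (¬ Summable (fun n => ‖φz n‖ ^ 2) → gammaZ M z₀ = 0)) ∧
    (0 < gammaZ M z₀ ↔ Summable (fun n => ‖φz n‖ ^ 2)) := by
  have hdiag : ∀ n, v n n ≠ 0 := fun n h => by simpa [h] using (hlead n).2
  have hφ0 : 0 < ‖φz 0‖ ^ 2 := by
    have : φz 0 = v 0 0 := by
      rw [hφz, sum_subset (hsupp 0) fun k _ hk => by simp [Finsupp.notMem_support_iff.mp hk],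
        show Iic 0 = {0} from rfl, sum_singleton, pow_zero, mul_one]
    exact pow_pos (norm_pos_iff.mpr (this ▸ hdiag 0)) 2
  obtain rfl : φz = fun n => evalAt z₀ (v n) := funext fun n => by rw [hφz, evalAt_apply]
  have hnonneg (n : ℕ) : 0 ≤ ‖evalAt z₀ (v n)‖ ^ 2 := by positivity
  -- `tsum` of a divergent series is `0`, so this also covers the divergent case.
  have hγ : gammaZ M z₀ = (∑' n, ‖evalAt z₀ (v n)‖ ^ 2)⁻¹ := by
    have hmem (N : ℕ) : (∑ n ∈ range (N + 1), ‖evalAt z₀ (v n)‖ ^ 2)⁻¹ ∈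
        {x | ∃ u, evalAt z₀ u = 1 ∧ QM M u = x} :=
      exists_evalAt_eq_one_QM_eq_inv horth z₀ (sum_pos' (fun n _ => hnonneg n) ⟨0, by simp, hφ0⟩)
    rw [gammaZ_eq_sInf_evalAt]
    refine (isGLB_of_antitone_of_tendsto (antitone_inv_sum_range_succ hnonneg hφ0)
      (tendsto_inv_sum_range_succ hnonneg hφ0) hmem ?_).csInf_eq ⟨_, hmem 0⟩
    rintro x ⟨u, hu, rfl⟩
    exact exists_inv_sum_range_le_QM horth hsupp hdiag hu
  refine ⟨⟨fun _ => by rw [hγ, one_div],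
    fun h => by rw [hγ, tsum_eq_zero_of_not_summable h, inv_zero]⟩, ?_⟩
  rw [hγ, inv_pos]
  exact ⟨fun h => by_contra fun hs => h.ne' (tsum_eq_zero_of_not_summable hs),
    fun hs => hs.tsum_pos hnonneg 0 hφ0⟩

/-- let `M` be Hermitian positive definite, `z₀ ∈ ℂ`, and `(φ_n)` the
orthonormal polynomials of `M` (given by coefficient vectors `v_n` supported on `{0,…,n}`
with positive real leading coefficient), with `φ_n(z₀) = Σ_k v_n(k) z₀^k`.  If
`Σ_n |φ_n(z₀)|² < ∞` then `γ_{z₀}(M) = 1 / Σ_n |φ_n(z₀)|²`, and if the sum diverges then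
`γ_{z₀}(M) = 0`; in particular `γ_{z₀}(M) > 0` iff `Σ_n |φ_n(z₀)|² < ∞`. -/
theorem gammaZ_eq_inv_kernel (M : ℕ → ℕ → ℂ)
    (hHerm : IsHermitianMatrix M) (hPD : IsPosDef M) (z₀ : ℂ)
    (v : ℕ → (ℕ →₀ ℂ))
    (hsupp : ∀ n, (v n).support ⊆ Finset.Iic n)
    (hlead : ∀ n, ((v n) n).im = 0 ∧ 0 < ((v n) n).re)
    (horth : ∀ n m, BM M (v n) (v m) = if n = m then 1 else 0)
    (φz : ℕ → ℂ) (hφz : ∀ n, φz n = ∑ k ∈ (v n).support, (v n) k * z₀ ^ k) :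
    ((Summable (fun n => ‖φz n‖ ^ 2) →
        gammaZ M z₀ = 1 / ∑' n, ‖φz n‖ ^ 2) ∧
      (¬ Summable (fun n => ‖φz n‖ ^ 2) → gammaZ M z₀ = 0)) ∧
    (0 < gammaZ M z₀ ↔ Summable (fun n => ‖φz n‖ ^ 2)) :=
  gammaZ_eq_inv_kernel_general M z₀ v hsupp hlead horth φz hφz
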